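/- Let γ>1, C>0, Q>1. There exists δ > 0, depending only on γ, C and Q, with the following property: for every α ∈ B₀(γ,C,Q) and every Jost solution F for α, the Jost function Π_α(z) = F₁(z,0) − F₂(z,0) has no zeros in the disk {z ∈ ℂ : |z| < 1+δ}; that is, the associated CMV operator has no resonances in that disk. -/

import Mathlib

open Complex Filter
open scoped ComplexConjugate Topology

noncomputable section

def cmvZeta (n : ℕ) (z : ℂ) : ℂ := if Odd n then z else 1

def enorm2 (v : ℂ × ℂ) : ℝ := Real.sqrt (‖v.1‖ ^ 2 + ‖v.2‖ ^ 2)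

def IsJostSolution (α : ℕ → ℂ) (F : ℂ → ℕ → ℂ × ℂ) : Prop :=
  (∀ z : ℂ, ∃ M : ℝ, ∀ k : ℕ, enorm2 (F z k) ≤ M) ∧
  ∀ (z : ℂ) (k : ℕ),
    Summable (fun n : ℕ => ‖α (k + 1 + n) * cmvZeta (k + 1 + n) z * (F z (k + 1 + n)).2‖) ∧
    Summable (fun n : ℕ => ‖z ^ n * conj (α (k + 1 + n)) * cmvZeta (k + 1) z * (F z (k + 1 + n)).1‖) ∧
    (F z k).1 = 1 - ∑' n : ℕ, α (k + 1 + n) * cmvZeta (k + 1 + n) z * (F z (k + 1 + n)).2 ∧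
    (F z k).2 = - ∑' n : ℕ, z ^ n * conj (α (k + 1 + n)) * cmvZeta (k + 1) z * (F z (k + 1 + n)).1

def SuperExpDecay (γ C : ℝ) (α : ℕ → ℂ) : Prop :=
  ∀ n : ℕ, 1 ≤ n → ‖α n‖ ≤ C * Real.exp (-(n : ℝ) ^ γ)

def MemB0 (γ C Q : ℝ) (α : ℕ → ℂ) : Prop :=
  (∀ k : ℕ, 1 ≤ k → ‖α k‖ < 1) ∧
  SuperExpDecay γ C α ∧
  1 / Q ≤ ∏' j : ℕ, (1 - ‖α (j + 1)‖)

def jostPi (F : ℂ → ℕ → ℂ × ℂ) (z : ℂ) : ℂ := (F z 0).1 - (F z 0).2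

def HasZeroOrder (f : ℂ → ℂ) (w : ℂ) (m : ℕ) : Prop :=
  ∃ g : ℂ → ℂ, AnalyticAt ℂ g w ∧ g w ≠ 0 ∧ ∀ᶠ x in 𝓝 w, f x = (x - w) ^ m * g x

def CMVStep (α : ℕ → ℂ) (z : ℂ) (k : ℕ) (prev cur : ℂ × ℂ) : Prop :=
  if Odd k then
    cur.1 = (α k * prev.1 + z * prev.2) / ((Real.sqrt (1 - ‖α k‖ ^ 2) : ℝ) : ℂ) ∧
    cur.2 = (prev.1 / z + conj (α k) * prev.2) / ((Real.sqrt (1 - ‖α k‖ ^ 2) : ℝ) : ℂ)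
  else
    cur.1 = (conj (α k) * prev.1 + prev.2) / ((Real.sqrt (1 - ‖α k‖ ^ 2) : ℝ) : ℂ) ∧
    cur.2 = (prev.1 + α k * prev.2) / ((Real.sqrt (1 - ‖α k‖ ^ 2) : ℝ) : ℂ)

end

/-! Summing the Jost equations at `k` and `k + 1` against each other turns them into a one-step
recursion `F(z, k) = T F(z, k + 1)`, where `T` is built from the disc automorphism
`u ↦ (u - conj A) / (1 - A u)` with `A = α (k + 1)`, and from `ζ = ζ_{k+1}(z)`.

By the super-exponential decay there is `K`, depending only on `γ` and `C`, such that the tail sums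
`∑ |α m| 2^m` beyond `K` are at most `1/8`; for `|z| ≤ 2` this forces `F(z, k)` to stay close to
`(1, 0)` for `k ≥ K`, so `|F₂(z, K)| ≤ |F₁(z, K)| / 2`. The product condition gives
`|α k| ≤ 1 - 1/Q`, so each of the `K` backward steps to `k = 0` shrinks the margin
`1 - |F₂| / |F₁|` at most by the factor `β = 1/(2Q)` and loses `O(δ)` from `|ζ| ≤ 1 + δ`.
With `δ = β^K / 10` the margin at `k = 0` is still positive, hence `F₁(z, 0) ≠ F₂(z, 0)`. -/

theorem summable_exp_neg_rpow_mul_pow {γ : ℝ} (hγ : 1 < γ) (r : ℝ) :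
    Summable fun m : ℕ => Real.exp (-(m : ℝ) ^ γ) * r ^ m := by
  obtain ⟨N, hN⟩ := exists_nat_ge |r|
  have hlarge : ∀ᶠ m : ℕ in atTop, (N : ℝ) + 1 ≤ (m : ℝ) ^ (γ - 1) :=
    ((tendsto_rpow_atTop (by linarith)).comp tendsto_natCast_atTop_atTop).eventually_ge_atTop _
  refine Real.summable_exp_neg_nat.of_norm_bounded_eventually_nat ?_
  filter_upwards [hlarge, eventually_gt_atTop 0] with m hm hm0
  have hm0' : (0 : ℝ) < m := by exact_mod_cast hm0
  have hpow : (m : ℝ) ^ γ = m * (m : ℝ) ^ (γ - 1) := by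
    conv_lhs => rw [show γ = 1 + (γ - 1) by ring, Real.rpow_add hm0', Real.rpow_one]
  have hr : |r| ^ m ≤ Real.exp (m * N) := by
    rw [Real.exp_nat_mul]
    exact pow_le_pow_left₀ (abs_nonneg r) (hN.trans (by linarith [Real.add_one_le_exp (N : ℝ)])) m
  rw [norm_mul, norm_pow, Real.norm_eq_abs, Real.norm_eq_abs, Real.abs_exp]
  calc Real.exp (-(m : ℝ) ^ γ) * |r| ^ m ≤ Real.exp (-(m : ℝ) ^ γ) * Real.exp (m * N) := by gcongr
    _ = Real.exp (m * N - m * (m : ℝ) ^ (γ - 1)) := by rw [← Real.exp_add, hpow]; ring_nf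
    _ ≤ Real.exp (-m) := Real.exp_le_exp.mpr (by nlinarith)

theorem Multipliable.tprod_le_apply {ι : Type*} {f : ι → ℝ} (hf : Multipliable f)
    (h0 : ∀ i, 0 ≤ f i) (h1 : ∀ i, f i ≤ 1) (i : ι) : ∏' j, f j ≤ f i := by
  classical
  refine le_of_tendsto hf.hasProd ?_
  rw [SummationFilter.unconditional_filter, eventually_atTop]
  refine ⟨{i}, fun s hs => ?_⟩
  rw [← Finset.mul_prod_erase s f (Finset.singleton_subset_iff.mp hs)]
  exact mul_le_of_le_one_right (h0 i) (Finset.prod_le_one (fun j _ => h0 j) (fun j _ => h1 j))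

/-- The Schwarz–Pick bound `|(u - conj A) / (1 - A u)| ≤ (s + |A|) / (1 + |A| s)` for `|u| ≤ s`,
at `u = w / p`. -/
theorem mul_norm_sub_conj_mul_le {A p w : ℂ} {s : ℝ} (hA : ‖A‖ ≤ 1) (hs0 : 0 ≤ s) (hs1 : s ≤ 1)
    (hw : ‖w‖ ≤ s * ‖p‖) :
    (1 + ‖A‖ * s) * ‖w - conj A * p‖ ≤ (s + ‖A‖) * ‖p - A * w‖ := by
  set a := ‖A‖
  set X := (A * w * conj p).re
  have hL : ‖w - conj A * p‖ ^ 2 = ‖w‖ ^ 2 + a ^ 2 * ‖p‖ ^ 2 - 2 * X := by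
    rw [Complex.sq_norm, Complex.normSq_sub, Complex.normSq_mul, Complex.normSq_conj,
      map_mul, Complex.conj_conj, show w * (A * conj p) = A * w * conj p by ring,
      ← Complex.sq_norm w, ← Complex.sq_norm A, ← Complex.sq_norm p]
  have hR : ‖p - A * w‖ ^ 2 = ‖p‖ ^ 2 + a ^ 2 * ‖w‖ ^ 2 - 2 * X := by
    rw [Complex.sq_norm, Complex.normSq_sub, Complex.normSq_mul, map_mul,
      ← Complex.sq_norm w, ← Complex.sq_norm A, ← Complex.sq_norm p, ← Complex.conj_re,
      show conj (p * (conj A * conj w)) = A * w * conj p by simp; ring]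
  have hX : -(a * ‖w‖ * ‖p‖) ≤ X := by
    refine neg_le_of_abs_le ((Complex.abs_re_le_norm _).trans_eq ?_)
    simp [a]
  have ha0 : 0 ≤ a := norm_nonneg A
  have hsq : ((1 + a * s) * ‖w - conj A * p‖) ^ 2 ≤ ((s + a) * ‖p - A * w‖) ^ 2 := by
    have e₁ : 0 ≤ (1 - a ^ 2) * ((s * ‖p‖ - ‖w‖) *
        ((1 + a ^ 2 + 2 * a * s) * ‖w‖ + (s + a ^ 2 * s + 2 * a) * ‖p‖)) := by
      have hw0 := norm_nonneg w
      have hp0 := norm_nonneg p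
      apply mul_nonneg (by nlinarith) (mul_nonneg (by linarith) (by positivity))
    have e₂ : 0 ≤ (1 - a ^ 2) * (2 * (1 - s ^ 2) * (X + a * ‖w‖ * ‖p‖)) :=
      mul_nonneg (by nlinarith) (mul_nonneg (by nlinarith) (by linarith))
    have expand : ((s + a) * ‖p - A * w‖) ^ 2 - ((1 + a * s) * ‖w - conj A * p‖) ^ 2 =
        (1 - a ^ 2) * ((s * ‖p‖ - ‖w‖) *
          ((1 + a ^ 2 + 2 * a * s) * ‖w‖ + (s + a ^ 2 * s + 2 * a) * ‖p‖)) +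
        (1 - a ^ 2) * (2 * (1 - s ^ 2) * (X + a * ‖w‖ * ‖p‖)) := by
      rw [mul_pow, mul_pow, hL, hR]; ring
    linarith
  exact (pow_le_pow_iff_left₀ (by positivity) (by positivity) two_ne_zero).mp hsq

theorem mobius_factor_le {a ρ β δ e : ℝ} (ha0 : 0 ≤ a) (ha : a ≤ 1 - 2 * β) (hβ : 0 ≤ β)
    (hρ0 : 0 ≤ ρ) (hρ : ρ ≤ 1 + δ) (hδ : 0 ≤ δ) (he : δ ≤ e) (he1 : e ≤ 1) :
    ρ * (ρ * (1 - e) + a) ≤ (1 - (β * e - 2 * δ)) * (1 + a * (ρ * (1 - e))) := by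
  set s := ρ * (1 - e)
  have hs0 : 0 ≤ s := mul_nonneg hρ0 (by linarith)
  have hs : e - δ ≤ 1 - s := by nlinarith
  have has : a * s ≤ 1 := by nlinarith
  have hgap : β * (e - δ) * (1 + a * s) ≤ (1 - a) * (1 - s) :=
    calc β * (e - δ) * (1 + a * s) ≤ β * (e - δ) * 2 := by gcongr; linarith
      _ ≤ (1 - a) * (e - δ) := by nlinarith
      _ ≤ (1 - a) * (1 - s) := by gcongr; linarith
  calc ρ * (s + a) ≤ (1 + δ) * ((1 - β * (e - δ)) * (1 + a * s)) := by
        gcongr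
        linarith
    _ = ((1 + δ) * (1 - β * (e - δ))) * (1 + a * s) := by ring
    _ ≤ (1 - (β * e - 2 * δ)) * (1 + a * s) := by
        gcongr
        nlinarith [mul_nonneg hδ (mul_nonneg hβ (sub_nonneg.mpr he))]

theorem mul_cmvZeta (z : ℂ) (n : ℕ) :
    z * cmvZeta n z = cmvZeta n z ^ 2 * cmvZeta (n + 1) z := by
  by_cases h : Odd n
  · simp only [cmvZeta, h, ↓reduceIte, Nat.odd_add_one, not_true_eq_false, mul_one]
    ring
  · simp [cmvZeta, h, Nat.odd_add_one]

theorem norm_cmvZeta_le (n : ℕ) (z : ℂ) : ‖cmvZeta n z‖ ≤ max 1 ‖z‖ := by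
  unfold cmvZeta
  split_ifs <;> simp

theorem norm_fst_le_enorm2 (v : ℂ × ℂ) : ‖v.1‖ ≤ enorm2 v :=
  Real.le_sqrt_of_sq_le (le_add_of_nonneg_right (sq_nonneg _))

theorem norm_snd_le_enorm2 (v : ℂ × ℂ) : ‖v.2‖ ≤ enorm2 v :=
  Real.le_sqrt_of_sq_le (le_add_of_nonneg_left (sq_nonneg _))

theorem MemB0.norm_le {γ C Q : ℝ} {α : ℕ → ℂ} (hγ : 1 < γ) (hα : MemB0 γ C Q α) {k : ℕ}
    (hk : 1 ≤ k) : ‖α k‖ ≤ 1 - 1 / Q := by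
  obtain ⟨hlt, hdecay, hprod⟩ := hα
  have hs : Summable fun j => ‖α (j + 1)‖ := by
    refine Summable.of_nonneg_of_le (fun j => norm_nonneg _) (fun j => ?_)
      ((summable_nat_add_iff 1).mpr ((summable_exp_neg_rpow_mul_pow hγ 1).mul_left C))
    simpa using hdecay (j + 1) (by omega)
  have hm : Multipliable fun j => 1 - ‖α (j + 1)‖ := by
    simpa only [sub_eq_add_neg] using Real.multipliable_one_add_of_summable hs.neg
  have hfactor := hprod.trans (hm.tprod_le_apply (fun j => by linarith [hlt (j + 1) (by omega)])
    (fun j => by linarith [norm_nonneg (α (j + 1))]) (k - 1))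
  rw [Nat.sub_add_cancel hk] at hfactor
  linarith

theorem exists_weighted_tail_le_of_superExpDecay {γ : ℝ} (hγ : 1 < γ) (C : ℝ) {ε : ℝ} (hε : 0 < ε) :
    ∃ K : ℕ, ∀ α : ℕ → ℂ, SuperExpDecay γ C α → ∀ k, K ≤ k →
      ∃ σ ≤ ε, HasSum (fun n => ‖α (k + 1 + n)‖ * 2 ^ (k + 1 + n)) σ := by
  set w : ℕ → ℝ := fun m => C * Real.exp (-(m : ℝ) ^ γ) * 2 ^ m
  have hw : Summable w := by
    simpa only [w, mul_assoc] using (summable_exp_neg_rpow_mul_pow hγ 2).mul_left C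
  obtain ⟨K, hK⟩ := eventually_atTop.mp ((tendsto_sum_nat_add w).eventually (ge_mem_nhds hε))
  refine ⟨K, fun α hα k hk => ?_⟩
  have hwk : Summable fun n => w (n + (k + 1)) := (summable_nat_add_iff (k + 1)).mpr hw
  have hle : ∀ n, ‖α (k + 1 + n)‖ * 2 ^ (k + 1 + n) ≤ w (n + (k + 1)) := fun n => by
    rw [add_comm n]
    exact mul_le_mul_of_nonneg_right (hα _ (by omega)) (by positivity)
  have hs := Summable.of_nonneg_of_le (fun n => by positivity) hle hwk
  exact ⟨_, (hs.tsum_le_tsum hle hwk).trans (hK _ (by omega)), hs.hasSum⟩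

def jostStep (A ζ : ℂ) (v : ℂ × ℂ) : ℂ × ℂ :=
  (v.1 - A * (ζ * v.2), ζ * (ζ * v.2 - conj A * v.1))

theorem IsJostSolution.eq_jostStep {α : ℕ → ℂ} {F : ℂ → ℕ → ℂ × ℂ} (hJ : IsJostSolution α F)
    (z : ℂ) (k : ℕ) : F z k = jostStep (α (k + 1)) (cmvZeta (k + 1) z) (F z (k + 1)) := by
  obtain ⟨hs₁, hs₂, h₁, h₂⟩ := hJ.2 z k
  obtain ⟨-, -, h₁', h₂'⟩ := hJ.2 z (k + 1)
  have hidx : ∀ n, k + 1 + (n + 1) = k + 1 + 1 + n := fun n => by omega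
  rw [(Summable.of_norm hs₁).tsum_eq_zero_add] at h₁
  rw [(Summable.of_norm hs₂).tsum_eq_zero_add] at h₂
  simp only [add_zero, pow_zero, one_mul] at h₁ h₂
  have hshift₁ : ∑' n, α (k + 1 + (n + 1)) * cmvZeta (k + 1 + (n + 1)) z *
      (F z (k + 1 + (n + 1))).2 = 1 - (F z (k + 1)).1 := by
    rw [h₁', sub_sub_cancel]
    exact tsum_congr fun n => by rw [hidx]
  have hshift₂ : ∑' n, z ^ (n + 1) * conj (α (k + 1 + (n + 1))) * cmvZeta (k + 1) z *
      (F z (k + 1 + (n + 1))).1 = cmvZeta (k + 1) z ^ 2 * -(F z (k + 1)).2 := by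
    rw [h₂', neg_neg, ← tsum_mul_left]
    refine tsum_congr fun n => ?_
    rw [hidx]
    linear_combination (z ^ n * conj (α (k + 1 + 1 + n)) * (F z (k + 1 + 1 + n)).1) *
      mul_cmvZeta z (k + 1)
  ext
  · rw [h₁, hshift₁, jostStep]; ring
  · rw [h₂, hshift₂, jostStep]; ring

def RatioBound (e : ℝ) (v : ℂ × ℂ) : Prop :=
  0 < ‖v.1‖ ∧ ‖v.2‖ ≤ (1 - e) * ‖v.1‖

theorem RatioBound.mono {e e' : ℝ} {v : ℂ × ℂ} (hv : RatioBound e v) (h : e' ≤ e) :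
    RatioBound e' v :=
  ⟨hv.1, hv.2.trans (by gcongr)⟩

theorem RatioBound.le_one {e : ℝ} {v : ℂ × ℂ} (hv : RatioBound e v) : e ≤ 1 := by
  by_contra! h
  nlinarith [hv.1, hv.2, norm_nonneg v.2]

theorem ratioBound_jostStep {A ζ : ℂ} {v : ℂ × ℂ} {β δ e : ℝ} (hv : RatioBound e v)
    (hβ : 0 < β) (hA : ‖A‖ ≤ 1 - 2 * β) (hδ : 0 ≤ δ) (hζ : ‖ζ‖ ≤ 1 + δ) (he : δ ≤ e) :
    RatioBound (β * e - 2 * δ) (jostStep A ζ v) := by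
  obtain ⟨hp, hq⟩ := hv
  set a := ‖A‖
  set s := ‖ζ‖ * (1 - e)
  have he1 : e ≤ 1 := RatioBound.le_one ⟨hp, hq⟩
  have hs0 : 0 ≤ s := mul_nonneg (norm_nonneg ζ) (by linarith)
  have hs1 : s ≤ 1 := by nlinarith [norm_nonneg ζ]
  have hw : ‖ζ * v.2‖ ≤ s * ‖v.1‖ := by
    rw [norm_mul, mul_assoc]; gcongr
  have hmob := mul_norm_sub_conj_mul_le (A := A) (by linarith) hs0 hs1 hw
  have hfac := mobius_factor_le (norm_nonneg A) hA hβ.le (norm_nonneg ζ) hζ hδ he he1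
  have hden : 0 < 1 + a * s := by positivity
  have hAw : ‖A * (ζ * v.2)‖ ≤ (1 - 2 * β) * ‖v.1‖ := by
    rw [norm_mul]
    calc a * ‖ζ * v.2‖ ≤ a * (s * ‖v.1‖) := by gcongr
      _ ≤ (1 - 2 * β) * ‖v.1‖ := by rw [← mul_assoc]; gcongr; nlinarith [norm_nonneg A]
  have hpos : 0 < ‖v.1 - A * (ζ * v.2)‖ := by
    have := norm_sub_norm_le v.1 (A * (ζ * v.2))
    nlinarith [mul_pos hβ hp]
  refine ⟨hpos, le_of_mul_le_mul_left ?_ hden⟩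
  calc (1 + a * s) * ‖ζ * (ζ * v.2 - conj A * v.1)‖
      = ‖ζ‖ * ((1 + a * s) * ‖ζ * v.2 - conj A * v.1‖) := by rw [norm_mul]; ring
    _ ≤ ‖ζ‖ * ((s + a) * ‖v.1 - A * (ζ * v.2)‖) := by gcongr
    _ = ‖ζ‖ * (s + a) * ‖v.1 - A * (ζ * v.2)‖ := by ring
    _ ≤ (1 - (β * e - 2 * δ)) * (1 + a * s) * ‖v.1 - A * (ζ * v.2)‖ := by gcongr
    _ = (1 + a * s) * ((1 - (β * e - 2 * δ)) * ‖v.1 - A * (ζ * v.2)‖) := by ring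

theorem ratioBound_of_forall_eq_jostStep {A ζ : ℕ → ℂ} {v : ℕ → ℂ × ℂ} {β δ : ℝ} {K : ℕ}
    (hβ : 0 < β) (hA : ∀ k, ‖A (k + 1)‖ ≤ 1 - 2 * β) (hδ : 0 ≤ δ)
    (hζ : ∀ k, ‖ζ (k + 1)‖ ≤ 1 + δ) (hδK : 10 * δ ≤ β ^ K)
    (hv : ∀ k < K, v k = jostStep (A (k + 1)) (ζ (k + 1)) (v (k + 1)))
    (hK : RatioBound (1 / 2) (v K)) :
    RatioBound (β ^ K / 2 - 4 * δ) (v 0) := by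
  -- `e i = β ^ i / 2 - 4 * δ` satisfies `e (i + 1) ≤ β * e i - 2 * δ` because `β ≤ 1 / 2`.
  have hβ1 : β ≤ 1 / 2 := by linarith [hA 0, norm_nonneg (A 1)]
  suffices ∀ i ≤ K, RatioBound (β ^ i / 2 - 4 * δ) (v (K - i)) by
    simpa using this K le_rfl
  intro i
  induction i with
  | zero => exact fun _ => hK.mono (by simp; linarith)
  | succ i ih =>
    intro hi
    have hKi : K - i = K - (i + 1) + 1 := by omega
    have hprev := ih (by omega)
    rw [hKi] at hprev
    have hstep := ratioBound_jostStep hprev hβ (hA (K - (i + 1))) hδ (hζ (K - (i + 1))) ?_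
    · rw [← hv _ (by omega)] at hstep
      refine hstep.mono ?_
      rw [pow_succ]
      nlinarith
    · have : β ^ K ≤ β ^ i := pow_le_pow_of_le_one hβ.le (by linarith) (by omega)
      linarith

theorem IsJostSolution.norm_snd_le {α : ℕ → ℂ} {F : ℂ → ℕ → ℂ × ℂ} (hJ : IsJostSolution α F)
    {z : ℂ} (hz : ‖z‖ ≤ 2) {k : ℕ} {σ B : ℝ}
    (hσ : HasSum (fun n => ‖α (k + 1 + n)‖ * 2 ^ (k + 1 + n)) σ)
    (hB : ∀ n, ‖(F z (k + 1 + n)).1‖ ≤ B) : ‖(F z k).2‖ ≤ σ * B := by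
  rw [(hJ.2 z k).2.2.2, norm_neg]
  refine tsum_of_norm_bounded (hσ.mul_right B) fun n => ?_
  have hζ : ‖cmvZeta (k + 1) z‖ ≤ 2 := (norm_cmvZeta_le _ _).trans (max_le one_le_two hz)
  have h2 : (2 : ℝ) ^ n * 2 ≤ 2 ^ (k + 1 + n) := by
    rw [← pow_succ]; exact pow_le_pow_right₀ one_le_two (by omega)
  simp only [norm_mul, norm_pow, Complex.norm_conj]
  calc ‖z‖ ^ n * ‖α (k + 1 + n)‖ * ‖cmvZeta (k + 1) z‖ * ‖(F z (k + 1 + n)).1‖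
      ≤ 2 ^ n * ‖α (k + 1 + n)‖ * 2 * B := by gcongr; exact hB n
    _ = ‖α (k + 1 + n)‖ * (2 ^ n * 2) * B := by ring
    _ ≤ ‖α (k + 1 + n)‖ * 2 ^ (k + 1 + n) * B := by
        gcongr; exact (norm_nonneg _).trans (hB 0)

theorem IsJostSolution.norm_fst_sub_one_le {α : ℕ → ℂ} {F : ℂ → ℕ → ℂ × ℂ}
    (hJ : IsJostSolution α F) {z : ℂ} (hz : ‖z‖ ≤ 2) {k : ℕ} {σ B : ℝ}
    (hσ : HasSum (fun n => ‖α (k + 1 + n)‖ * 2 ^ (k + 1 + n)) σ)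
    (hB : ∀ n, ‖(F z (k + 1 + n)).2‖ ≤ B) : ‖(F z k).1 - 1‖ ≤ σ * B := by
  rw [(hJ.2 z k).2.2.1, sub_sub_cancel_left, norm_neg]
  refine tsum_of_norm_bounded (hσ.mul_right B) fun n => ?_
  have hζ : ‖cmvZeta (k + 1 + n) z‖ ≤ 2 := (norm_cmvZeta_le _ _).trans (max_le one_le_two hz)
  have h2 : (2 : ℝ) ≤ 2 ^ (k + 1 + n) := le_self_pow₀ one_le_two (by omega)
  simp only [norm_mul]
  calc ‖α (k + 1 + n)‖ * ‖cmvZeta (k + 1 + n) z‖ * ‖(F z (k + 1 + n)).2‖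
      ≤ ‖α (k + 1 + n)‖ * 2 * B := by gcongr; exact hB n
    _ ≤ ‖α (k + 1 + n)‖ * 2 ^ (k + 1 + n) * B := by
        gcongr; exact (norm_nonneg _).trans (hB 0)

theorem IsJostSolution.ratioBound_half {α : ℕ → ℂ} {F : ℂ → ℕ → ℂ × ℂ} (hJ : IsJostSolution α F)
    {z : ℂ} (hz : ‖z‖ ≤ 2) {K : ℕ}
    (hσ : ∀ k, K ≤ k → ∃ σ ≤ 1 / 8, HasSum (fun n => ‖α (k + 1 + n)‖ * 2 ^ (k + 1 + n)) σ) :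
    RatioBound (1 / 2) (F z K) := by
  obtain ⟨M, hM⟩ := hJ.1 z
  set S₁ := ⨆ j, ‖(F z (K + j)).1‖
  set S₂ := ⨆ j, ‖(F z (K + j)).2‖
  have hb₁ : BddAbove (Set.range fun j => ‖(F z (K + j)).1‖) :=
    ⟨M, by rintro _ ⟨j, rfl⟩; exact (norm_fst_le_enorm2 _).trans (hM _)⟩
  have hb₂ : BddAbove (Set.range fun j => ‖(F z (K + j)).2‖) :=
    ⟨M, by rintro _ ⟨j, rfl⟩; exact (norm_snd_le_enorm2 _).trans (hM _)⟩
  have hS₁ : 0 ≤ S₁ := (norm_nonneg _).trans (le_ciSup hb₁ 0)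
  have hS₂ : 0 ≤ S₂ := (norm_nonneg _).trans (le_ciSup hb₂ 0)
  have h₂ : ∀ j, ‖(F z (K + j)).2‖ ≤ S₁ / 8 := fun j => by
    obtain ⟨σ, hσ8, hσj⟩ := hσ (K + j) (by omega)
    have := hJ.norm_snd_le hz hσj fun n => by
      simpa [add_assoc] using le_ciSup hb₁ (j + 1 + n)
    nlinarith
  have h₁ : ∀ j, ‖(F z (K + j)).1 - 1‖ ≤ S₂ / 8 := fun j => by
    obtain ⟨σ, hσ8, hσj⟩ := hσ (K + j) (by omega)
    have := hJ.norm_fst_sub_one_le hz hσj fun n => by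
      simpa [add_assoc] using le_ciSup hb₂ (j + 1 + n)
    nlinarith
  have hS₂S₁ : S₂ ≤ S₁ / 8 := ciSup_le h₂
  have hS₁S₂ : S₁ ≤ 1 + S₂ / 8 := ciSup_le fun j => by
    linarith [h₁ j, norm_le_insert' (F z (K + j)).1 1, norm_one (α := ℂ)]
  have hK₁ : ‖(F z K).1 - 1‖ ≤ S₂ / 8 := by simpa using h₁ 0
  have hK₂ : ‖(F z K).2‖ ≤ S₁ / 8 := by simpa using h₂ 0
  have hlow : 1 - S₂ / 8 ≤ ‖(F z K).1‖ := by
    linarith [norm_sub_norm_le (1 : ℂ) (F z K).1, norm_sub_rev (1 : ℂ) (F z K).1,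
      norm_one (α := ℂ)]
  exact ⟨by linarith, by linarith⟩

theorem no_resonances_near_unit_circle_general (γ C Q : ℝ) (hγ : 1 < γ) (hQ : 1 < Q) :
    ∃ δ : ℝ, 0 < δ ∧
      ∀ (α : ℕ → ℂ) (F : ℂ → ℕ → ℂ × ℂ), MemB0 γ C Q α → IsJostSolution α F →
        ∀ z : ℂ, ‖z‖ < 1 + δ → jostPi F z ≠ 0 := by
  obtain ⟨K, hK⟩ := exists_weighted_tail_le_of_superExpDecay hγ C (by norm_num : (0 : ℝ) < 1 / 8)
  set β : ℝ := 1 / (2 * Q) with hβdef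
  have h2β : 2 * β = 1 / Q := by rw [hβdef]; field_simp
  have hβ : 0 < β := by positivity
  have hβK : β ^ K ≤ 1 := pow_le_one₀ hβ.le (by rw [div_le_one (by positivity)]; linarith)
  refine ⟨β ^ K / 10, by positivity, fun α F hα hJ z hz => ?_⟩
  have hA : ∀ k, ‖α (k + 1)‖ ≤ 1 - 2 * β := fun k => by
    rw [h2β]
    exact hα.norm_le hγ (Nat.le_add_left 1 k)
  have hζ : ∀ k, ‖cmvZeta (k + 1) z‖ ≤ 1 + β ^ K / 10 := fun k =>
    (norm_cmvZeta_le _ _).trans (max_le (le_add_of_nonneg_right (by positivity)) hz.le)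
  have hF : RatioBound (β ^ K / 2 - 4 * (β ^ K / 10)) (F z 0) :=
    ratioBound_of_forall_eq_jostStep (ζ := fun n => cmvZeta n z) hβ hA (by positivity) hζ
      (by linarith) (fun k _ => hJ.eq_jostStep z k) (hJ.ratioBound_half (by linarith) (hK α hα.2.1))
  obtain ⟨hF₁, hF₂⟩ := hF
  intro hzero
  rw [jostPi, sub_eq_zero] at hzero
  rw [hzero] at hF₁ hF₂
  nlinarith [mul_pos (pow_pos hβ K) hF₁]

theorem no_resonances_near_unit_circle (γ C Q : ℝ) (hγ : 1 < γ) (hC : 0 < C) (hQ : 1 < Q) :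
    ∃ δ : ℝ, 0 < δ ∧
      ∀ (α : ℕ → ℂ) (F : ℂ → ℕ → ℂ × ℂ), MemB0 γ C Q α → IsJostSolution α F →
        ∀ z : ℂ, ‖z‖ < 1 + δ → jostPi F z ≠ 0 :=
  no_resonances_near_unit_circle_general γ C Q hγ hQ
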